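/- arXiv:2412.03325 — 5 statements merged into one kernel-verified Lean document; each statement's English description precedes it below -/
import Mathlib

section
/- Let (f̄_n)_{n≥1} be a sequence of positive real numbers such that f̄_n → 1, ∑_{n=1}^∞ (1 − f̄_n)_+ = ∞, and ∑_{n=1}^∞ (f̄_n − 1)_+ < ∞. Then there exists a nondecreasing sequence A : ℕ → ℕ with A(n) → ∞ such that n · ∏_{j=1}^{A(n)} f̄_j → 1 as n → ∞. -/
open Filter Finset Topology

/-!
Since `x ≤ exp (x - 1)`, the partial products `P m = ∏_{j ≤ m} f̄_j` are bounded by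
`exp (∑ (f̄_j - 1)_+ - ∑_{j ≤ m} (1 - f̄_j)_+)`, so `P m → 0`. Taking `A n` to be the first
index with `n · P (A n) ≤ 1`, minimality gives `n · P (A n - 1) > 1`, hence
`f̄_{A n} ≤ n · P (A n) ≤ 1`, and `f̄_{A n} → 1` because `A n → ∞`.
-/

theorem tendsto_prod_range_zero_of_not_summable {g : ℕ → ℝ} (hg : ∀ i, 0 ≤ g i)
    (hsum : Summable fun i => max (g i - 1) 0) (hdiv : ¬Summable fun i => max (1 - g i) 0) :
    Tendsto (fun m => ∏ i ∈ range m, g i) atTop (𝓝 0) := by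
  set C := ∑' i, max (g i - 1) 0
  have hneg : Tendsto (fun m => ∑ i ∈ range m, max (1 - g i) 0) atTop atTop :=
    (not_summable_iff_tendsto_nat_atTop_of_nonneg fun i => le_max_right _ _).mp hdiv
  have hbound :
      Tendsto (fun m => Real.exp (C - ∑ i ∈ range m, max (1 - g i) 0)) atTop (𝓝 0) :=
    Real.tendsto_exp_atBot.comp
      (tendsto_atBot_add_const_left _ C (tendsto_neg_atTop_atBot.comp hneg))
  refine tendsto_of_tendsto_of_tendsto_of_le_of_le tendsto_const_nhds hbound
    (fun m => prod_nonneg fun i _ => hg i) fun m => ?_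
  have hsplit : ∀ i, g i - 1 = max (g i - 1) 0 - max (1 - g i) 0 := fun i => by
    rcases le_total (g i) 1 with h | h <;> simp [h]
  calc ∏ i ∈ range m, g i ≤ ∏ i ∈ range m, Real.exp (g i - 1) :=
        prod_le_prod (fun i _ => hg i) fun i _ => by linarith [Real.add_one_le_exp (g i - 1)]
    _ = Real.exp (∑ i ∈ range m, max (g i - 1) 0 - ∑ i ∈ range m, max (1 - g i) 0) := by
        rw [← Real.exp_sum, ← sum_sub_distrib]
        simp only [← hsplit]
    _ ≤ Real.exp (C - ∑ i ∈ range m, max (1 - g i) 0) := by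
        gcongr
        exact hsum.sum_le_tsum _ fun i _ => le_max_right _ _

section FirstCrossing

variable {P : ℕ → ℝ}

theorem exists_natCast_mul_le_one (hP : Tendsto P atTop (𝓝 0)) (n : ℕ) :
    ∃ m, (n : ℝ) * P m ≤ 1 := by
  have h : Tendsto (fun m => (n : ℝ) * P m) atTop (𝓝 0) := by
    simpa using hP.const_mul (n : ℝ)
  exact (h.eventually_le_const one_pos).exists

open Classical in
noncomputable def firstCrossing (hP : Tendsto P atTop (𝓝 0)) (n : ℕ) : ℕ :=
  Nat.find (exists_natCast_mul_le_one hP n)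

theorem natCast_mul_firstCrossing_le_one (hP : Tendsto P atTop (𝓝 0)) (n : ℕ) :
    (n : ℝ) * P (firstCrossing hP n) ≤ 1 := by
  classical
  exact Nat.find_spec (exists_natCast_mul_le_one hP n)

theorem one_lt_natCast_mul_of_lt_firstCrossing (hP : Tendsto P atTop (𝓝 0)) {n m : ℕ}
    (hm : m < firstCrossing hP n) :
    1 < (n : ℝ) * P m := by
  classical
  exact not_le.mp (Nat.find_min (exists_natCast_mul_le_one hP n) hm)

theorem monotone_firstCrossing (hP : Tendsto P atTop (𝓝 0)) (hP_nonneg : ∀ m, 0 ≤ P m) :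
    Monotone (firstCrossing hP) := by
  classical
  intro a b hab
  refine Nat.find_mono fun m hm => le_trans ?_ hm
  exact mul_le_mul_of_nonneg_right (Nat.cast_le.mpr hab) (hP_nonneg m)

theorem tendsto_firstCrossing_atTop (hP : Tendsto P atTop (𝓝 0)) (hP_pos : ∀ m, 0 < P m) :
    Tendsto (firstCrossing hP) atTop atTop := by
  refine tendsto_atTop.mpr fun b => ?_
  have hlarge : ∀ᶠ n : ℕ in atTop, ∀ m ∈ range b, 1 < (n : ℝ) * P m :=
    (eventually_all_finset _).mpr fun m _ =>
      (tendsto_natCast_atTop_atTop.atTop_mul_const (hP_pos m)).eventually_gt_atTop 1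
  filter_upwards [hlarge] with n hn
  by_contra! hlt
  exact (natCast_mul_firstCrossing_le_one hP n).not_gt (hn _ (mem_range.mpr hlt))

end FirstCrossing

theorem exists_monotone_tendsto_natCast_mul_prod_range {g : ℕ → ℝ} (hg : ∀ i, 0 < g i)
    (hlim : Tendsto g atTop (𝓝 1))
    (hP : Tendsto (fun m => ∏ i ∈ range m, g i) atTop (𝓝 0)) :
    ∃ A : ℕ → ℕ, Monotone A ∧ Tendsto A atTop atTop ∧
      Tendsto (fun n : ℕ => (n : ℝ) * ∏ i ∈ range (A n), g i) atTop (𝓝 1) := by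
  have hP_pos : ∀ m, 0 < ∏ i ∈ range m, g i := fun m => prod_pos fun i _ => hg i
  set A := firstCrossing hP
  have hAtop : Tendsto A atTop atTop := tendsto_firstCrossing_atTop hP hP_pos
  refine ⟨A, monotone_firstCrossing hP fun m => (hP_pos m).le, hAtop, ?_⟩
  have hlower : ∀ n : ℕ, 2 ≤ n → g (A n - 1) ≤ n * ∏ i ∈ range (A n), g i := by
    intro n hn
    have hA_pos : 0 < A n :=
      Nat.pos_of_ne_zero fun h0 => by
        have h := natCast_mul_firstCrossing_le_one hP n
        have : (2 : ℝ) ≤ n := by exact_mod_cast hn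
        simp only [A] at h0
        rw [h0, prod_range_zero, mul_one] at h
        linarith
    have hmin := one_lt_natCast_mul_of_lt_firstCrossing hP (Nat.sub_one_lt_of_lt hA_pos)
    rw [← Nat.sub_add_cancel hA_pos, prod_range_succ, ← mul_assoc]
    exact le_mul_of_one_le_left (hg _).le hmin.le
  exact tendsto_of_tendsto_of_tendsto_of_le_of_le'
    (hlim.comp ((tendsto_sub_atTop_nat 1).comp hAtop)) tendsto_const_nhds
    ((eventually_ge_atTop 2).mono hlower)
    (Eventually.of_forall (natCast_mul_firstCrossing_le_one hP))

theorem stmt0 (fbar : ℕ → ℝ)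
    (hpos : ∀ n, 1 ≤ n → 0 < fbar n)
    (hlim : Tendsto fbar atTop (nhds 1))
    (hdiv : ¬ Summable (fun n => max (1 - fbar n) 0))
    (hsum : Summable (fun n => max (fbar n - 1) 0)) :
    ∃ A : ℕ → ℕ, Monotone A ∧ Tendsto A atTop atTop ∧
      Tendsto (fun n : ℕ => (n : ℝ) * ∏ j ∈ Finset.Icc 1 (A n), fbar j) atTop (nhds 1) := by
  have hg : ∀ i, 0 < fbar (i + 1) := fun i => hpos (i + 1) (Nat.le_add_left 1 i)
  have hP := tendsto_prod_range_zero_of_not_summable (fun i => (hg i).le)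
    ((summable_nat_add_iff 1).mpr hsum) fun h => hdiv ((summable_nat_add_iff 1).mp h)
  obtain ⟨A, hmono, htop, hprod⟩ :=
    exists_monotone_tendsto_natCast_mul_prod_range hg ((tendsto_add_atTop_iff_nat 1).mpr hlim) hP
  refine ⟨A, hmono, htop, hprod.congr fun n => ?_⟩
  rw [← Ico_add_one_right_eq_Icc, prod_Ico_eq_prod_range, add_tsub_cancel_right]
  simp only [add_comm]
end

section
/- Let (f̄_n)_{n≥1} be a sequence of positive reals with f̄_n → 1, ∑_n (1 − f̄_n)_+ = ∞, ∑_n (f̄_n − 1)_+ < ∞. For integers n, j, k with 1 ≤ j ≤ n − 1 define a_{n,j}^{(k)} = (1 − f̄_j) ∏_{i=j+1}^{n} f̄_i^k, and a_{n,n}^{(k)} = 1 − f̄_n. If (x_n)_{n≥1} is a bounded real sequence such that x_n → x ∈ ℝ as n → ∞ along the subsequence {n : f̄_n < 1}, then for every integer k ≥ 1, lim_{n→∞} ∑_{j=1}^{n} a_{n,j}^{(k)} x_j = x/k and lim_{n→∞} ∑_{j=1}^{n} |a_{n,j}^{(k)}| x_j = x/k. -/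
/-!
Put `Q j n = (∏_{j < i ≤ n} f̄ i) ^ k`. Since `f̄ i ≤ exp (f̄ i - 1)`, the product is at most
`exp (∑ (f̄ - 1)₊ - ∑ (1 - f̄)₊)` over the range of the product; so `Q` is bounded and, for each
fixed `j`, `Q j n → 0`. The weights `(1 - f̄ j ^ k) Q j n` telescope to `1 - Q 0 n → 1`, and
`1 - f̄ ^ k = (1 - f̄) g` with `g = 1 + f̄ + ⋯ + f̄ ^ (k - 1) → k`. Hence the weights
`a n j = (1 - f̄ j) Q j n` have bounded absolute row sums and vanishing columns (a Toeplitz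
matrix), the sums with weights `(1 - f̄ j ^ k) Q j n = g j a n j` tend to `x`, and those with
weights `a n j` tend to `x / k`. Indices with `f̄ j ≥ 1`, where nothing is known about `x j`, and
the difference `|a n j| - a n j = 2 (f̄ j - 1)₊ Q j n` only contribute terms dominated by the
summable `(f̄ j - 1)₊`, which vanish in the limit by dominated convergence.
-/

open Filter Finset Topology Real

-- Silverman–Toeplitz for null sequences.
theorem tendsto_sum_mul_of_tendsto_zero {ι : Type*} {l : Filter ι} {s : ι → Finset ℕ}
    {w : ι → ℕ → ℝ} {y : ℕ → ℝ} {A : ℝ}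
    (hcol : ∀ j, Tendsto (fun n => w n j) l (𝓝 0)) (hrow : ∀ n, ∑ j ∈ s n, |w n j| ≤ A)
    (hy : Tendsto y atTop (𝓝 0)) :
    Tendsto (fun n => ∑ j ∈ s n, w n j * y j) l (𝓝 0) := by
  rw [Metric.tendsto_nhds]
  intro ε hε
  set δ := ε / (2 * (|A| + 1))
  have hδ : 0 < δ := by positivity
  obtain ⟨N, hN⟩ := eventually_atTop.mp ((Metric.tendsto_nhds.mp hy) δ hδ)
  have hhead : Tendsto (fun n => ∑ j ∈ range N, |w n j| * |y j|) l (𝓝 0) := by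
    simpa using tendsto_finsetSum (range N) fun j _ => ((hcol j).abs.mul_const |y j|)
  filter_upwards [(Metric.tendsto_nhds.mp hhead) (ε / 2) (by positivity)] with n hn
  rw [Real.dist_eq, sub_zero, abs_of_nonneg (by positivity)] at hn
  have htail : ∑ j ∈ s n with ¬ j < N, |w n j| * |y j| ≤ δ * A := by
    calc ∑ j ∈ s n with ¬ j < N, |w n j| * |y j|
        ≤ ∑ j ∈ s n with ¬ j < N, δ * |w n j| := by
          refine sum_le_sum fun j hj => ?_
          have hyj := hN j (not_lt.mp (mem_filter.mp hj).2)
          rw [Real.dist_eq, sub_zero] at hyj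
          nlinarith [abs_nonneg (w n j)]
      _ ≤ δ * ∑ j ∈ s n, |w n j| := by
          rw [← mul_sum]
          exact mul_le_mul_of_nonneg_left
            (sum_le_sum_of_subset_of_nonneg (filter_subset _ _) fun _ _ _ => abs_nonneg _) hδ.le
      _ ≤ δ * A := mul_le_mul_of_nonneg_left (hrow n) hδ.le
  have hδA : δ * A < ε / 2 := by
    calc δ * A ≤ δ * |A| := mul_le_mul_of_nonneg_left (le_abs_self A) hδ.le
      _ < ε / 2 := by
        rw [div_mul_eq_mul_div, div_lt_iff₀ (by positivity)]
        nlinarith [abs_nonneg A]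
  rw [Real.dist_eq, sub_zero]
  calc |∑ j ∈ s n, w n j * y j| ≤ ∑ j ∈ s n, |w n j| * |y j| := by
        simpa only [abs_mul] using abs_sum_le_sum_abs (fun j => w n j * y j) (s n)
    _ = ∑ j ∈ s n with j < N, |w n j| * |y j| + ∑ j ∈ s n with ¬ j < N, |w n j| * |y j| :=
        (sum_filter_add_sum_filter_not _ _ _).symm
    _ ≤ ∑ j ∈ range N, |w n j| * |y j| + δ * A := by
        refine add_le_add (sum_le_sum_of_subset_of_nonneg (fun j hj => ?_)
          fun _ _ _ => by positivity) htail
        simpa using (mem_filter.mp hj).2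
    _ < ε := by linarith

theorem tendsto_sum_of_dominated {ι β : Type*} {l : Filter ι} {s : ι → Finset β}
    {w : ι → β → ℝ} {c : β → ℝ} (hcol : ∀ j, Tendsto (fun n => w n j) l (𝓝 0))
    (hc : Summable c) (hbound : ∀ n, ∀ j ∈ s n, |w n j| ≤ c j) :
    Tendsto (fun n => ∑ j ∈ s n, w n j) l (𝓝 0) := by
  classical
  have h := tendsto_tsum_of_dominated_convergence (𝓕 := l)
    (f := fun n j => if j ∈ s n then w n j else 0) (g := 0) hc.abs (fun j => ?_)
    (.of_forall fun n j => ?_)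
  · simpa [tsum_eq_sum (s := s _) (fun j hj => if_neg hj)] using h
  · exact squeeze_zero_norm (fun n => by split_ifs <;> simp) ((hcol j).norm.trans (by simp))
  · split_ifs with hj
    · exact (hbound n j hj).trans (le_abs_self _)
    · simp

theorem prod_le_exp_sum_sub_one {ι : Type*} {s : Finset ι} {a : ι → ℝ}
    (ha : ∀ i ∈ s, 0 ≤ a i) : ∏ i ∈ s, a i ≤ exp (∑ i ∈ s, (a i - 1)) := by
  rw [exp_sum]
  exact prod_le_prod ha fun i _ => by linarith [add_one_le_exp (a i - 1)]

theorem prod_le_exp_tsum_max_sub_one {ι : Type*} {s : Finset ι} {a : ι → ℝ} (ha : ∀ i ∈ s, 0 ≤ a i)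
    (hsum : Summable fun i => max (a i - 1) 0) :
    ∏ i ∈ s, a i ≤ exp (∑' i, max (a i - 1) 0) :=
  (prod_le_exp_sum_sub_one ha).trans <| exp_le_exp.mpr <|
    (sum_le_sum fun _ _ => le_max_left _ _).trans
      (hsum.sum_le_tsum s fun _ _ => le_max_right _ _)

theorem tendsto_sum_Icc_atTop_of_not_summable {u : ℕ → ℝ} (hu : ∀ i, 0 ≤ u i)
    (hdiv : ¬ Summable u) (m : ℕ) :
    Tendsto (fun n => ∑ i ∈ Icc m n, u i) atTop atTop := by
  have h := ((not_summable_iff_tendsto_nat_atTop_of_nonneg hu).mp hdiv).comp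
    (tendsto_add_atTop_nat 1)
  refine (tendsto_atTop_add_const_left _ (-∑ i ∈ range m, u i) h).congr' ?_
  filter_upwards [eventually_ge_atTop m] with n hn
  rw [Function.comp_apply, ← sum_range_add_sum_Ico u (by omega : m ≤ n + 1),
    Ico_add_one_right_eq_Icc]
  ring

theorem tendsto_prod_Icc_zero_of_not_summable {a : ℕ → ℝ} {m : ℕ} (ha : ∀ i, m ≤ i → 0 ≤ a i)
    (hdiv : ¬ Summable fun i => max (1 - a i) 0) (hsum : Summable fun i => max (a i - 1) 0) :
    Tendsto (fun n => ∏ i ∈ Icc m n, a i) atTop (𝓝 0) := by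
  have ha' : ∀ n, ∀ i ∈ Icc m n, 0 ≤ a i := fun n i hi => ha i (mem_Icc.mp hi).1
  have hsplit : ∀ t : ℝ, t - 1 = max (t - 1) 0 - max (1 - t) 0 := fun t => by
    rcases le_total t 1 with h | h <;> simp [h]
  have hexp : Tendsto (fun n => exp (∑' i, max (a i - 1) 0 - ∑ i ∈ Icc m n, max (1 - a i) 0))
      atTop (𝓝 0) :=
    tendsto_exp_atBot.comp <| tendsto_atBot_add_const_left _ _ <| tendsto_neg_atTop_atBot.comp <|
      tendsto_sum_Icc_atTop_of_not_summable (fun i => le_max_right _ _) hdiv m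
  refine squeeze_zero (fun n => prod_nonneg (ha' n)) (fun n => ?_) hexp
  refine (prod_le_exp_sum_sub_one (ha' n)).trans (exp_le_exp.mpr ?_)
  rw [sum_congr rfl fun i _ => hsplit (a i), sum_sub_distrib]
  linarith [hsum.sum_le_tsum (Icc m n) fun i _ => le_max_right _ _]

theorem sum_one_sub_mul_prod_Icc {R : Type*} [CommRing R] (b : ℕ → R) (n : ℕ) :
    ∑ j ∈ Icc 1 n, (1 - b j) * ∏ i ∈ Icc (j + 1) n, b i = 1 - ∏ i ∈ Icc 1 n, b i := by
  induction n with
  | zero => simp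
  | succ n ih =>
    have hstep : ∀ j ∈ Icc 1 n, (1 - b j) * ∏ i ∈ Icc (j + 1) (n + 1), b i
        = (1 - b j) * (∏ i ∈ Icc (j + 1) n, b i) * b (n + 1) := fun j hj => by
      rw [prod_Icc_succ_top (by have := (mem_Icc.mp hj).2; omega), mul_assoc]
    rw [sum_Icc_succ_top (by omega), sum_congr rfl hstep, ← sum_mul, ih,
      Icc_eq_empty (by omega : ¬ n + 1 + 1 ≤ n + 1), prod_empty, prod_Icc_succ_top (by omega)]
    ring

theorem abs_one_sub_le_one_sub_pow_add {t G : ℝ} {k : ℕ} (ht : 0 ≤ t) (hk : k ≠ 0)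
    (hG : ∑ i ∈ range k, t ^ i ≤ G) : |1 - t| ≤ 1 - t ^ k + 2 * (G * max (t - 1) 0) := by
  have hg : 1 ≤ ∑ i ∈ range k, t ^ i := by
    simpa using single_le_sum (fun i _ => pow_nonneg ht i) (mem_range.2 (Nat.pos_of_ne_zero hk))
  rw [← mul_neg_geom_sum]
  rcases le_total t 1 with h | h
  · rw [abs_of_nonneg (by linarith), max_eq_right (by linarith)]
    nlinarith
  · rw [abs_of_nonpos (by linarith), max_eq_left (by linarith)]
    nlinarith

-- `(1 - f j) * tailProd f j n ^ k` is the weight `a_{n,j}^{(k)}`, also for `j = n`, where the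
-- product is empty.
def tailProd (f : ℕ → ℝ) (j n : ℕ) : ℝ := ∏ i ∈ Icc (j + 1) n, f i

section

variable {f : ℕ → ℝ} {k : ℕ}

theorem tailProd_nonneg (hf : ∀ i, 1 ≤ i → 0 ≤ f i) (j n : ℕ) : 0 ≤ tailProd f j n :=
  prod_nonneg fun i hi => hf i (by have := (mem_Icc.mp hi).1; omega)

theorem tailProd_le (hf : ∀ i, 1 ≤ i → 0 ≤ f i) (hsum : Summable fun i => max (f i - 1) 0)
    (j n : ℕ) : tailProd f j n ≤ exp (∑' i, max (f i - 1) 0) :=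
  prod_le_exp_tsum_max_sub_one (fun i hi => hf i (by have := (mem_Icc.mp hi).1; omega)) hsum

theorem tendsto_tailProd_pow (hf : ∀ i, 1 ≤ i → 0 ≤ f i)
    (hdiv : ¬ Summable fun i => max (1 - f i) 0) (hsum : Summable fun i => max (f i - 1) 0)
    (hk : k ≠ 0) (j : ℕ) : Tendsto (fun n => tailProd f j n ^ k) atTop (𝓝 0) := by
  have h := (tendsto_prod_Icc_zero_of_not_summable (m := j + 1) (fun i hi => hf i (by omega))
    hdiv hsum).pow k
  rwa [zero_pow hk] at h

theorem sum_one_sub_pow_mul_tailProd_pow (n : ℕ) :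
    ∑ j ∈ Icc 1 n, (1 - f j ^ k) * tailProd f j n ^ k = 1 - tailProd f 0 n ^ k := by
  simpa [tailProd, prod_pow] using sum_one_sub_mul_prod_Icc (fun i => f i ^ k) n

theorem tendsto_geom_sum_of_tendsto_one (hlim : Tendsto f atTop (𝓝 1)) :
    Tendsto (fun j => ∑ i ∈ range k, f j ^ i) atTop (𝓝 k) := by
  simpa using tendsto_finsetSum (range k) fun i _ => hlim.pow i

theorem exists_sum_abs_weight_le (hf : ∀ i, 1 ≤ i → 0 ≤ f i) (hlim : Tendsto f atTop (𝓝 1))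
    (hsum : Summable fun i => max (f i - 1) 0) (hk : k ≠ 0) :
    ∃ A, ∀ n, ∑ j ∈ Icc 1 n, |(1 - f j) * tailProd f j n ^ k| ≤ A := by
  obtain ⟨G, hG⟩ := (tendsto_geom_sum_of_tendsto_one (k := k) hlim).bddAbove_range
  have hG' : ∀ j, ∑ i ∈ range k, f j ^ i ≤ G := fun j => hG ⟨j, rfl⟩
  have hG0 : 0 ≤ G := (sum_nonneg fun i _ => pow_nonneg (hf 1 le_rfl) i).trans (hG' 1)
  set T := ∑' i, max (f i - 1) 0
  set M := exp T ^ k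
  refine ⟨1 + 2 * (G * M * T), fun n => ?_⟩
  have hterm : ∀ j ∈ Icc 1 n, |(1 - f j) * tailProd f j n ^ k|
      ≤ (1 - f j ^ k) * tailProd f j n ^ k + 2 * (G * M * max (f j - 1) 0) := by
    intro j hj
    have hQ : 0 ≤ tailProd f j n ^ k := pow_nonneg (tailProd_nonneg hf j n) k
    have hQM : tailProd f j n ^ k ≤ M := pow_le_pow_left₀ (tailProd_nonneg hf j n)
      (tailProd_le hf hsum j n) k
    have hmax : 0 ≤ G * max (f j - 1) 0 := mul_nonneg hG0 (le_max_right _ _)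
    rw [abs_mul, abs_of_nonneg hQ]
    calc |1 - f j| * tailProd f j n ^ k
        ≤ (1 - f j ^ k + 2 * (G * max (f j - 1) 0)) * tailProd f j n ^ k :=
          mul_le_mul_of_nonneg_right (abs_one_sub_le_one_sub_pow_add
            (hf j (mem_Icc.mp hj).1) hk (hG' j)) hQ
      _ ≤ _ := by nlinarith
  have hT : ∑ j ∈ Icc 1 n, max (f j - 1) 0 ≤ T := hsum.sum_le_tsum _ fun _ _ => le_max_right _ _
  calc ∑ j ∈ Icc 1 n, |(1 - f j) * tailProd f j n ^ k|
      ≤ ∑ j ∈ Icc 1 n, ((1 - f j ^ k) * tailProd f j n ^ k + 2 * (G * M * max (f j - 1) 0)) :=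
        sum_le_sum hterm
    _ = 1 - tailProd f 0 n ^ k + 2 * (G * M * ∑ j ∈ Icc 1 n, max (f j - 1) 0) := by
        rw [sum_add_distrib, sum_one_sub_pow_mul_tailProd_pow, ← mul_sum, ← mul_sum]
    _ ≤ 1 + 2 * (G * M * T) := by
        have := pow_nonneg (tailProd_nonneg hf 0 n) k
        have : 0 ≤ G * M := mul_nonneg hG0 (by positivity)
        nlinarith

theorem tendsto_sum_weight_mul (hf : ∀ i, 1 ≤ i → 0 ≤ f i) (hlim : Tendsto f atTop (𝓝 1))
    (hdiv : ¬ Summable fun i => max (1 - f i) 0) (hsum : Summable fun i => max (f i - 1) 0)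
    (hk : k ≠ 0) {u : ℕ → ℝ} (hu : Tendsto u atTop (𝓝 0)) :
    Tendsto (fun n => ∑ j ∈ Icc 1 n, (1 - f j) * tailProd f j n ^ k * u j) atTop (𝓝 0) := by
  obtain ⟨A, hA⟩ := exists_sum_abs_weight_le hf hlim hsum hk
  refine tendsto_sum_mul_of_tendsto_zero (fun j => ?_) hA hu
  simpa using (tendsto_tailProd_pow hf hdiv hsum hk j).const_mul (1 - f j)

theorem tendsto_sum_max_sub_one_mul (hf : ∀ i, 1 ≤ i → 0 ≤ f i)
    (hdiv : ¬ Summable fun i => max (1 - f i) 0) (hsum : Summable fun i => max (f i - 1) 0)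
    (hk : k ≠ 0) {u : ℕ → ℝ} (hu : ∃ C, ∀ j, |u j| ≤ C) :
    Tendsto (fun n => ∑ j ∈ Icc 1 n, max (f j - 1) 0 * tailProd f j n ^ k * u j)
      atTop (𝓝 0) := by
  obtain ⟨C, hC⟩ := hu
  refine tendsto_sum_of_dominated (fun j => ?_)
    (hsum.mul_right (exp (∑' i, max (f i - 1) 0) ^ k * C)) (fun n j _ => ?_)
  · simpa using
      ((tendsto_tailProd_pow hf hdiv hsum hk j).const_mul (max (f j - 1) 0)).mul_const (u j)
  · rw [abs_mul, abs_mul, abs_of_nonneg (le_max_right _ _),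
      abs_of_nonneg (pow_nonneg (tailProd_nonneg hf j n) k), mul_assoc]
    gcongr
    · exact tailProd_nonneg hf j n
    · exact tailProd_le hf hsum j n
    · exact hC j

theorem tendsto_sum_one_sub_pow_mul (hf : ∀ i, 1 ≤ i → 0 ≤ f i) (hlim : Tendsto f atTop (𝓝 1))
    (hdiv : ¬ Summable fun i => max (1 - f i) 0) (hsum : Summable fun i => max (f i - 1) 0)
    (hk : k ≠ 0) {x : ℕ → ℝ} {xlim : ℝ} (hbdd : ∃ C, ∀ n, |x n| ≤ C)
    (hx : Tendsto x (atTop ⊓ 𝓟 {n | f n < 1}) (𝓝 xlim)) :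
    Tendsto (fun n => ∑ j ∈ Icc 1 n, (1 - f j ^ k) * tailProd f j n ^ k * x j)
      atTop (𝓝 xlim) := by
  set S := {n | f n < 1}
  set g := fun j => ∑ i ∈ range k, f j ^ i
  -- `x - xlim = y + z` with `y → 0`, while `z` lives on `{f ≥ 1}`, where `1 - f ^ k` is
  -- controlled by the summable `(f - 1)₊`.
  set y := S.indicator fun j => x j - xlim
  set z := Sᶜ.indicator fun j => x j - xlim
  obtain ⟨C, hC⟩ := hbdd
  obtain ⟨G, hG⟩ := (tendsto_geom_sum_of_tendsto_one (k := k) hlim).norm.bddAbove_range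
  have hy : Tendsto y atTop (𝓝 0) := by
    refine (tendsto_inf_principal_nhds_iff_of_forall_eq fun j hj =>
      Set.indicator_of_notMem hj _).mp ?_
    rw [← sub_self xlim]
    exact (hx.sub_const xlim).congr' (eventually_inf_principal.mpr (.of_forall fun j hj =>
      (Set.indicator_of_mem hj _).symm))
  have hgz : ∃ D, ∀ j, |-(g j * z j)| ≤ D := by
    refine ⟨G * (C + |xlim|), fun j => ?_⟩
    have hz : |z j| ≤ C + |xlim| := by
      unfold z Set.indicator
      split_ifs
      · exact (abs_sub _ _).trans (by linarith [hC j])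
      · rw [abs_zero]
        linarith [(abs_nonneg _).trans (hC j), abs_nonneg xlim]
    rw [abs_neg, abs_mul]
    exact mul_le_mul (hG ⟨j, rfl⟩) hz (abs_nonneg _) ((norm_nonneg _).trans (hG ⟨j, rfl⟩))
  have hsplit : ∀ n, ∑ j ∈ Icc 1 n, (1 - f j ^ k) * tailProd f j n ^ k * x j
      = xlim * (1 - tailProd f 0 n ^ k)
        + ∑ j ∈ Icc 1 n, (1 - f j) * tailProd f j n ^ k * (g j * y j)
        + ∑ j ∈ Icc 1 n, max (f j - 1) 0 * tailProd f j n ^ k * -(g j * z j) := by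
    intro n
    rw [← sum_one_sub_pow_mul_tailProd_pow, mul_sum, ← sum_add_distrib, ← sum_add_distrib]
    refine sum_congr rfl fun j _ => ?_
    rw [← mul_neg_geom_sum]
    by_cases hj : j ∈ S
    · simp only [g, y, z, Set.indicator_of_mem hj,
        Set.indicator_of_notMem (Set.notMem_compl_iff.mpr hj)]
      ring
    · have hfj : max (f j - 1) 0 = f j - 1 := max_eq_left (sub_nonneg.mpr (not_lt.mp hj))
      simp only [g, y, z, Set.indicator_of_notMem hj, Set.indicator_of_mem (Set.mem_compl hj), hfj]
      ring
  have hgy : Tendsto (fun j => g j * y j) atTop (𝓝 0) := isBoundedUnder_le_mul_tendsto_zero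
    (tendsto_geom_sum_of_tendsto_one hlim).norm.isBoundedUnder_le hy
  have hconst : Tendsto (fun n => xlim * (1 - tailProd f 0 n ^ k)) atTop (𝓝 xlim) := by
    simpa using ((tendsto_tailProd_pow hf hdiv hsum hk 0).const_sub 1).const_mul xlim
  refine Tendsto.congr (fun n => (hsplit n).symm) ?_
  simpa only [add_zero] using (hconst.add (tendsto_sum_weight_mul hf hlim hdiv hsum hk hgy)).add
    (tendsto_sum_max_sub_one_mul hf hdiv hsum hk hgz)

theorem tendsto_sum_weight_mul_of_tendsto (hf : ∀ i, 1 ≤ i → 0 ≤ f i)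
    (hlim : Tendsto f atTop (𝓝 1)) (hdiv : ¬ Summable fun i => max (1 - f i) 0)
    (hsum : Summable fun i => max (f i - 1) 0) (hk : k ≠ 0) {x : ℕ → ℝ} {xlim : ℝ}
    (hbdd : ∃ C, ∀ n, |x n| ≤ C) (hx : Tendsto x (atTop ⊓ 𝓟 {n | f n < 1}) (𝓝 xlim)) :
    Tendsto (fun n => ∑ j ∈ Icc 1 n, (1 - f j) * tailProd f j n ^ k * x j)
      atTop (𝓝 (xlim / k)) := by
  obtain ⟨C, hC⟩ := hbdd
  have hgk : Tendsto (fun j => k - ∑ i ∈ range k, f j ^ i) atTop (𝓝 0) := by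
    simpa using (tendsto_geom_sum_of_tendsto_one (k := k) hlim).const_sub (k : ℝ)
  have herr := tendsto_sum_weight_mul hf hlim hdiv hsum hk
    (hgk.zero_mul_isBoundedUnder_le (isBoundedUnder_of ⟨C, fun j => hC j⟩))
  have h := ((tendsto_sum_one_sub_pow_mul hf hlim hdiv hsum hk ⟨C, hC⟩ hx).add herr).div_const
    (k : ℝ)
  rw [add_zero] at h
  refine h.congr fun n => ?_
  rw [← sum_add_distrib, sum_div]
  refine sum_congr rfl fun j _ => ?_
  rw [← mul_neg_geom_sum]
  field_simp
  ring

theorem tendsto_sum_abs_weight_mul_of_tendsto (hf : ∀ i, 1 ≤ i → 0 ≤ f i)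
    (hlim : Tendsto f atTop (𝓝 1)) (hdiv : ¬ Summable fun i => max (1 - f i) 0)
    (hsum : Summable fun i => max (f i - 1) 0) (hk : k ≠ 0) {x : ℕ → ℝ} {xlim : ℝ}
    (hbdd : ∃ C, ∀ n, |x n| ≤ C) (hx : Tendsto x (atTop ⊓ 𝓟 {n | f n < 1}) (𝓝 xlim)) :
    Tendsto (fun n => ∑ j ∈ Icc 1 n, |(1 - f j) * tailProd f j n ^ k| * x j)
      atTop (𝓝 (xlim / k)) := by
  obtain ⟨C, hC⟩ := hbdd
  have h := (tendsto_sum_weight_mul_of_tendsto hf hlim hdiv hsum hk ⟨C, hC⟩ hx).add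
    (tendsto_sum_max_sub_one_mul hf hdiv hsum hk (u := fun j => 2 * x j)
      ⟨2 * C, fun j => by simpa [abs_mul] using hC j⟩)
  rw [add_zero] at h
  refine h.congr fun n => ?_
  rw [← sum_add_distrib]
  refine sum_congr rfl fun j _ => ?_
  rw [abs_mul, abs_of_nonneg (pow_nonneg (tailProd_nonneg hf j n) k)]
  rcases le_total (f j) 1 with h1 | h1
  · rw [abs_of_nonneg (by linarith), max_eq_right (by linarith)]
    ring
  · rw [abs_of_nonpos (by linarith), max_eq_left (by linarith)]
    ring

end

theorem stmt2 (fbar : ℕ → ℝ) (x : ℕ → ℝ) (xlim : ℝ)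
    (hpos : ∀ n, 1 ≤ n → 0 < fbar n)
    (hlim : Tendsto fbar atTop (nhds 1))
    (hdiv : ¬ Summable (fun n => max (1 - fbar n) 0))
    (hsum : Summable (fun n => max (fbar n - 1) 0))
    (hbdd : ∃ C, ∀ n, |x n| ≤ C)
    (hx : Tendsto x (atTop ⊓ 𝓟 {n | fbar n < 1}) (nhds xlim))
    (k : ℕ) (hk : 1 ≤ k) :
    Tendsto (fun n => ∑ j ∈ Finset.Icc 1 n,
        ((1 - fbar j) * (∏ i ∈ Finset.Icc (j+1) n, fbar i) ^ k) * x j)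
      atTop (nhds (xlim / k)) ∧
    Tendsto (fun n => ∑ j ∈ Finset.Icc 1 n,
        |(1 - fbar j) * (∏ i ∈ Finset.Icc (j+1) n, fbar i) ^ k| * x j)
      atTop (nhds (xlim / k)) := by
  have hf : ∀ i, 1 ≤ i → 0 ≤ fbar i := fun i hi => (hpos i hi).le
  have hk0 : k ≠ 0 := by omega
  exact ⟨tendsto_sum_weight_mul_of_tendsto hf hlim hdiv hsum hk0 hbdd hx,
    tendsto_sum_abs_weight_mul_of_tendsto hf hlim hdiv hsum hk0 hbdd hx⟩
end

section
/- Under conditions (C1)–(C3) with ν > 0, and assuming additionally that f̄_n ≠ 1 for all n, the shape functions φ_n of f_n satisfy lim_{n→∞, f̄_n<1} sup_{s∈[0,1]} |φ_n(1) − φ_n(s)| / (1 − f̄_n) = 0, where the limit is taken along the subsequence {n : f̄_n < 1}, and the sequence ( sup_{s∈[0,1]} |φ_n(1) − φ_n(s)| / |1 − f̄_n| )_n is bounded. -/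
open Filter Finset

structure PGF where
  p : ℕ → ℝ
  nonneg : ∀ k, 0 ≤ p k
  hasSum_one : HasSum p 1

noncomputable def PGF.eval (f : PGF) (s : ℝ) : ℝ := ∑' k, f.p k * s ^ k

noncomputable def PGF.mean (f : PGF) : ℝ := ∑' k : ℕ, (k : ℝ) * f.p k

noncomputable def PGF.m2 (f : PGF) : ℝ := ∑' k : ℕ, (k : ℝ) * ((k : ℝ) - 1) * f.p k

noncomputable def PGF.m3 (f : PGF) : ℝ := ∑' k : ℕ, (k : ℝ) * ((k : ℝ) - 1) * ((k : ℝ) - 2) * f.p k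

noncomputable def shape (f : PGF) (s : ℝ) : ℝ :=
  if s = 1 then f.m2 / (2 * f.mean ^ 2) else 1 / (1 - f.eval s) - 1 / (f.mean * (1 - s))



lemma knn (k : ℕ) : 0 ≤ (k:ℝ)*((k:ℝ)-1) := by
  rcases k with _|k
  · simp
  · push_cast; nlinarith [Nat.cast_nonneg (α := ℝ) k]

lemma k3nn (k : ℕ) : 0 ≤ (k:ℝ)*((k:ℝ)-1)*((k:ℝ)-2) := by
  rcases k with _|k
  · simp
  · rcases k with _|k
    · simp
    · push_cast
      have h : (0:ℝ) ≤ ((k:ℝ)+2)*(((k:ℝ)+1)*(k:ℝ)) := by positivity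
      nlinarith [h]

lemma pl1 (k : ℕ) {s : ℝ} (hs0 : 0 ≤ s) (hs1 : s ≤ 1) :
    1 - (k:ℝ)*(1-s) ≤ s^k := by
  have h := one_add_mul_le_pow (a := s - 1) (by linarith) k
  have h2 : (k:ℝ)*(s-1) = -((k:ℝ)*(1-s)) := by ring
  calc 1 - (k:ℝ)*(1-s) = 1 + (k:ℝ)*(s-1) := by linarith
    _ ≤ (1 + (s-1))^k := h
    _ = s^k := by ring_nf

lemma pl2 (k : ℕ) {s : ℝ} (hs0 : 0 ≤ s) (hs1 : s ≤ 1) :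
    s^k ≤ 1 - (k:ℝ)*(1-s) + ((k:ℝ)*((k:ℝ)-1)/2)*(1-s)^2 := by
  induction k with
  | zero => norm_num
  | succ k ih =>
    have h := mul_le_mul_of_nonneg_right ih hs0
    rw [← pow_succ] at h
    refine h.trans ?_
    push_cast
    nlinarith [knn k, mul_nonneg (knn k) (pow_nonneg (by linarith : (0:ℝ) ≤ 1 - s) 3),
      mul_nonneg (Nat.cast_nonneg (α := ℝ) k) (pow_nonneg (by linarith : (0:ℝ) ≤ 1 - s) 2)]

lemma pl3 (k : ℕ) {s : ℝ} (hs0 : 0 ≤ s) (hs1 : s ≤ 1) :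
    1 - (k:ℝ)*(1-s) + ((k:ℝ)*((k:ℝ)-1)/2)*(1-s)^2 - ((k:ℝ)*((k:ℝ)-1)*((k:ℝ)-2)/6)*(1-s)^3 ≤ s^k := by
  induction k with
  | zero => norm_num
  | succ k ih =>
    have h := mul_le_mul_of_nonneg_right ih hs0
    rw [← pow_succ] at h
    refine le_trans ?_ h
    push_cast
    nlinarith [k3nn k, mul_nonneg (k3nn k) (pow_nonneg (by linarith : (0:ℝ) ≤ 1 - s) 4)]

lemma m2_nonneg (f : PGF) : 0 ≤ f.m2 :=
  tsum_nonneg fun k => mul_nonneg (knn k) (f.nonneg k)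

lemma m3_nonneg (f : PGF) : 0 ≤ f.m3 :=
  tsum_nonneg fun k => mul_nonneg (k3nn k) (f.nonneg k)

lemma N_bounds (f : PGF)
    (h1 : Summable (fun k : ℕ => (k:ℝ) * f.p k))
    (h2 : Summable (fun k : ℕ => (k:ℝ)*((k:ℝ)-1)*f.p k))
    (h3 : Summable (fun k : ℕ => (k:ℝ)*((k:ℝ)-1)*((k:ℝ)-2)*f.p k))
    {s : ℝ} (hs0 : 0 ≤ s) (hs1 : s ≤ 1) :
    0 ≤ f.mean*(1-s) - (1 - f.eval s) ∧
    f.mean*(1-s) - (1 - f.eval s) ≤ f.m2*((1-s)^2/2) ∧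
    f.m2*((1-s)^2/2) - f.m3*((1-s)^3/6) ≤ f.mean*(1-s) - (1 - f.eval s) := by
  have hsum_eval : Summable (fun k : ℕ => f.p k * s^k) := by
    refine Summable.of_nonneg_of_le (fun k => mul_nonneg (f.nonneg k) (pow_nonneg hs0 k)) (fun k => ?_) f.hasSum_one.summable
    exact mul_le_of_le_one_right (f.nonneg k) (pow_le_one₀ hs0 hs1)
  have hev : HasSum (fun k : ℕ => f.p k * s^k) (f.eval s) := hsum_eval.hasSum
  have hmean : HasSum (fun k : ℕ => (k:ℝ)*f.p k) f.mean := h1.hasSum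
  have hm2 : HasSum (fun k : ℕ => (k:ℝ)*((k:ℝ)-1)*f.p k) f.m2 := h2.hasSum
  have hm3 : HasSum (fun k : ℕ => (k:ℝ)*((k:ℝ)-1)*((k:ℝ)-2)*f.p k) f.m3 := h3.hasSum
  have h1s : HasSum (fun k : ℕ => f.p k * (1 - s^k)) (1 - f.eval s) := by
    have := f.hasSum_one.sub hev
    simpa [mul_sub] using this
  have hN : HasSum (fun k : ℕ => f.p k * ((k:ℝ)*(1-s) - (1 - s^k)))
      (f.mean*(1-s) - (1 - f.eval s)) := by
    have h := (hmean.mul_right (1-s)).sub h1s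
    rw [show (fun k : ℕ => (k:ℝ)*f.p k*(1-s) - f.p k*(1-s^k))
        = (fun k : ℕ => f.p k * ((k:ℝ)*(1-s) - (1 - s^k))) from funext fun k => by ring] at h
    exact h
  have hB2 : HasSum (fun k : ℕ => f.p k * ((k:ℝ)*((k:ℝ)-1)/2*(1-s)^2)) (f.m2*((1-s)^2/2)) := by
    have h := hm2.mul_right ((1-s)^2/2)
    rw [show (fun k : ℕ => (k:ℝ)*((k:ℝ)-1)*f.p k*((1-s)^2/2))
        = (fun k : ℕ => f.p k * ((k:ℝ)*((k:ℝ)-1)/2*(1-s)^2)) from funext fun k => by ring,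
      show f.m2*((1-s)^2/2) = f.m2*((1-s)^2/2) from rfl] at h
    exact h
  have hB3 : HasSum (fun k : ℕ =>
      f.p k * ((k:ℝ)*((k:ℝ)-1)/2*(1-s)^2 - (k:ℝ)*((k:ℝ)-1)*((k:ℝ)-2)/6*(1-s)^3))
      (f.m2*((1-s)^2/2) - f.m3*((1-s)^3/6)) := by
    have h := hB2.sub (hm3.mul_right ((1-s)^3/6))
    rw [show (fun k : ℕ => f.p k * ((k:ℝ)*((k:ℝ)-1)/2*(1-s)^2)
          - (k:ℝ)*((k:ℝ)-1)*((k:ℝ)-2)*f.p k*((1-s)^3/6))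
        = (fun k : ℕ => f.p k * ((k:ℝ)*((k:ℝ)-1)/2*(1-s)^2
          - (k:ℝ)*((k:ℝ)-1)*((k:ℝ)-2)/6*(1-s)^3)) from funext fun k => by ring] at h
    exact h
  refine ⟨?_, ?_, ?_⟩
  · refine hasSum_le (fun k => ?_) hasSum_zero hN
    have := pl1 k hs0 hs1
    exact mul_nonneg (f.nonneg k) (by linarith)
  · refine hasSum_le (fun k => ?_) hN hB2
    have := pl2 k hs0 hs1
    exact mul_le_mul_of_nonneg_left (by linarith) (f.nonneg k)
  · refine hasSum_le (fun k => ?_) hB3 hN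
    have := pl3 k hs0 hs1
    exact mul_le_mul_of_nonneg_left (by linarith) (f.nonneg k)

set_option maxHeartbeats 1000000 in
lemma key (f : PGF)
    (h1 : Summable (fun k : ℕ => (k:ℝ) * f.p k))
    (h2 : Summable (fun k : ℕ => (k:ℝ)*((k:ℝ)-1)*f.p k))
    (h3 : Summable (fun k : ℕ => (k:ℝ)*((k:ℝ)-1)*((k:ℝ)-2)*f.p k))
    (ha1 : 1/2 ≤ f.mean) (ha2 : f.mean ≤ 2) (hb : f.m2 ≤ f.mean/2)
    {s : ℝ} (hs0 : 0 ≤ s) (hs1 : s ≤ 1) :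
    |shape f 1 - shape f s| ≤ 4*f.m3 + 3*f.m2*f.m2 := by
  have hm2 := m2_nonneg f
  have hm3 := m3_nonneg f
  rcases eq_or_lt_of_le hs1 with rfl | hlt
  · simp only [sub_self, abs_zero]
    nlinarith [mul_nonneg hm2 hm2]
  · obtain ⟨hN0, hNub, hNlb⟩ := N_bounds f h1 h2 h3 hs0 hs1
    set a := f.mean with ha_def
    set e := 1 - f.eval s with he_def
    set u := 1 - s with hu_def
    clear_value a e u
    have hu0 : 0 < u := by rw [hu_def]; linarith
    have hu1 : u ≤ 1 := by rw [hu_def]; linarith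
    have ha0 : 0 < a := by linarith
    have hau : 0 < a*u := mul_pos ha0 hu0
    have hu2 : (0:ℝ) ≤ u^2 := sq_nonneg u
    have hu3p : (0:ℝ) ≤ u^3 := pow_nonneg hu0.le 3
    have hstep1 : f.m2*(u^2/2) ≤ (a/2)*(u^2/2) :=
      mul_le_mul_of_nonneg_right hb (by positivity)
    have hstep2 : a*u*u ≤ a*u*1 := mul_le_mul_of_nonneg_left hu1 hau.le
    have he_lb : (3/4)*(a*u) ≤ e := by nlinarith [hstep1, hstep2]
    have he0 : 0 < e := lt_of_lt_of_le (by nlinarith [hau]) he_lb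
    have hs_ne : s ≠ 1 := ne_of_lt hlt
    have hshape1 : shape f 1 = f.m2 / (2*a^2) := by rw [shape, if_pos rfl, ← ha_def]
    have hshapes : shape f s = 1/e - 1/(a*u) := by
      rw [shape, if_neg hs_ne, ← he_def, ← hu_def, ← ha_def]
    rw [hshape1, hshapes]
    have hD0 : (0:ℝ) < a^2*u*e := mul_pos (mul_pos (pow_pos ha0 2) hu0) he0
    have hrw : f.m2/(2*a^2) - (1/e - 1/(a*u))
        = (f.m2/2*u*e - a*(a*u - e)) / (a^2*u*e) := by
      field_simp
    rw [hrw, abs_div, abs_of_pos hD0, div_le_iff₀ hD0]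
    have hK0 : (0:ℝ) ≤ 4*f.m3 + 3*f.m2*f.m2 := by nlinarith [mul_nonneg hm2 hm2]
    have hNum : |f.m2/2*u*e - a*(a*u - e)| ≤ (a*(f.m3/6) + (f.m2/2)^2)*u^3 := by
      rw [abs_le]
      have m2u : (0:ℝ) ≤ f.m2/2*u := mul_nonneg (by linarith) hu0.le
      have t1 : (f.m2/2*u)*(a*u - e) ≤ (f.m2/2*u)*(f.m2*(u^2/2)) :=
        mul_le_mul_of_nonneg_left hNub m2u
      have t2 : (0:ℝ) ≤ a*(f.m2*(u^2/2) - (a*u - e)) :=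
        mul_nonneg ha0.le (by linarith)
      have t3 : (0:ℝ) ≤ (f.m2/2*u)*(a*u - e) := mul_nonneg m2u hN0
      have t4 : a*(f.m2*(u^2/2) - (a*u - e)) ≤ a*(f.m3*(u^3/6)) :=
        mul_le_mul_of_nonneg_left (by linarith) ha0.le
      have t5 : (0:ℝ) ≤ (f.m2/2)*(f.m2/2)*u^3 :=
        mul_nonneg (mul_nonneg (by linarith) (by linarith)) hu3p
      constructor
      · nlinarith [t1, t2]
      · nlinarith [t3, t4, t5]
    refine hNum.trans ?_
    have hprod : (3/4)*(a*u) * (a^2*u) ≤ e * (a^2*u) :=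
      mul_le_mul_of_nonneg_right he_lb (mul_nonneg (pow_nonneg ha0.le 2) hu0.le)
    have hD2 : (3/4)*(a^3*u^2) ≤ a^2*u*e := by nlinarith [hprod]
    have hu3 : u^3 ≤ u^2 := by nlinarith [mul_le_mul_of_nonneg_left hu1 (sq_nonneg u)]
    have ha3 : (1:ℝ)/8 ≤ a^3 := by
      have hin : (1/2:ℝ)*(1/2) ≤ a*a := mul_le_mul ha1 ha1 (by norm_num) ha0.le
      have hout : (1/2:ℝ)*((1/2)*(1/2)) ≤ a*(a*a) :=
        mul_le_mul ha1 hin (by norm_num) ha0.le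
      nlinarith [hout]
    have s1 : (a*(f.m3/6) + (f.m2/2)^2)*u^3 ≤ ((3:ℝ)/32)*(4*f.m3 + 3*f.m2*f.m2)*u^2 := by
      have w1 : (0:ℝ) ≤ f.m3*(u^2 - u^3) := mul_nonneg hm3 (by linarith)
      have w2 : (0:ℝ) ≤ f.m2*f.m2*(u^2 - u^3) := mul_nonneg (mul_nonneg hm2 hm2) (by linarith)
      have w3 : a*(f.m3*u^3) ≤ 2*(f.m3*u^3) :=
        mul_le_mul_of_nonneg_right ha2 (mul_nonneg hm3 hu3p)
      have w5 : (0:ℝ) ≤ f.m3*u^2 := mul_nonneg hm3 hu2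
      have w6 : (0:ℝ) ≤ f.m2*f.m2*u^2 := mul_nonneg (mul_nonneg hm2 hm2) hu2
      nlinarith [w1, w2, w3, w5, w6]
    have s2 : ((3:ℝ)/32)*(4*f.m3 + 3*f.m2*f.m2)*u^2
        ≤ (4*f.m3 + 3*f.m2*f.m2)*((3/4)*(a^3*u^2)) := by
      have w4 : (4*f.m3 + 3*f.m2*f.m2)*((1:ℝ)/8*u^2) ≤ (4*f.m3 + 3*f.m2*f.m2)*(a^3*u^2) :=
        mul_le_mul_of_nonneg_left (mul_le_mul_of_nonneg_right ha3 hu2) hK0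
      linarith [w4]
    have s3 : (4*f.m3 + 3*f.m2*f.m2)*((3/4)*(a^3*u^2)) ≤ (4*f.m3 + 3*f.m2*f.m2)*(a^2*u*e) :=
      mul_le_mul_of_nonneg_left hD2 hK0
    linarith [s1, s2, s3]

lemma sup_bounds (f : PGF)
    (h1 : Summable (fun k : ℕ => (k:ℝ) * f.p k))
    (h2 : Summable (fun k : ℕ => (k:ℝ)*((k:ℝ)-1)*f.p k))
    (h3 : Summable (fun k : ℕ => (k:ℝ)*((k:ℝ)-1)*((k:ℝ)-2)*f.p k))
    (ha1 : 1/2 ≤ f.mean) (ha2 : f.mean ≤ 2) (hb : f.m2 ≤ f.mean/2) :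
    0 ≤ sSup ((fun s => |shape f 1 - shape f s|) '' Set.Icc (0 : ℝ) 1) ∧
    sSup ((fun s => |shape f 1 - shape f s|) '' Set.Icc (0 : ℝ) 1) ≤ 4*f.m3 + 3*f.m2*f.m2 := by
  have hm2 := m2_nonneg f
  have hm3 := m3_nonneg f
  have hK0 : (0:ℝ) ≤ 4*f.m3 + 3*f.m2*f.m2 := by nlinarith [mul_nonneg hm2 hm2]
  have hub : ∀ x ∈ (fun s => |shape f 1 - shape f s|) '' Set.Icc (0 : ℝ) 1,
      x ≤ 4*f.m3 + 3*f.m2*f.m2 := by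
    rintro x ⟨t, ht, rfl⟩
    exact key f h1 h2 h3 ha1 ha2 hb ht.1 ht.2
  constructor
  · refine le_csSup ⟨_, hub⟩ ⟨1, Set.right_mem_Icc.mpr zero_le_one, ?_⟩
    simp
  · exact Real.sSup_le hub hK0

theorem stmt3 (f : ℕ → PGF) (ν : ℝ) (hν : 0 < ν)
    (hmean_sum : ∀ n, Summable (fun k : ℕ => (k : ℝ) * (f n).p k))
    (hm2_sum : ∀ n, Summable (fun k : ℕ => (k : ℝ) * ((k : ℝ) - 1) * (f n).p k))
    (hm3_sum : ∀ n, Summable (fun k : ℕ => (k : ℝ) * ((k : ℝ) - 1) * ((k : ℝ) - 2) * (f n).p k))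
    (hmean_pos : ∀ n, 0 < (f n).mean) (hmean_ne : ∀ n, (f n).mean ≠ 1)
    (hC1a : Tendsto (fun n => (f n).mean) atTop (nhds 1))
    (hC1b : ¬ Summable (fun n => max (1 - (f n).mean) 0))
    (hC1c : Summable (fun n => max ((f n).mean - 1) 0))
    (hC2a : Tendsto (fun n => (f n).m2 / (1 - (f n).mean))
      (atTop ⊓ 𝓟 {n | (f n).mean < 1}) (nhds ν))
    (hC2b : ∃ C, ∀ n, (f n).m2 / |1 - (f n).mean| ≤ C)
    (hC3a : Tendsto (fun n => (f n).m3 / (1 - (f n).mean))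
      (atTop ⊓ 𝓟 {n | (f n).mean < 1}) (nhds 0))
    (hC3b : ∃ C, ∀ n, (f n).m3 / |1 - (f n).mean| ≤ C) :
    Tendsto (fun n =>
        sSup ((fun s => |shape (f n) 1 - shape (f n) s|) '' Set.Icc (0 : ℝ) 1) / (1 - (f n).mean))
      (atTop ⊓ 𝓟 {n | (f n).mean < 1}) (nhds 0) ∧
    ∃ C, ∀ n,
      sSup ((fun s => |shape (f n) 1 - shape (f n) s|) '' Set.Icc (0 : ℝ) 1) / |1 - (f n).mean| ≤ C := by
  obtain ⟨C2, hC2⟩ := hC2b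
  obtain ⟨C3, hC3⟩ := hC3b
  set S := fun n => sSup ((fun s => |shape (f n) 1 - shape (f n) s|) '' Set.Icc (0 : ℝ) 1) with hS_def
  set C2' := max C2 0 with hC2'_def
  set C3' := max C3 0 with hC3'_def
  have hC2'0 : 0 ≤ C2' := le_max_right _ _
  have hC3'0 : 0 ≤ C3' := le_max_right _ _
  have habs_pos : ∀ n, 0 < |1 - (f n).mean| :=
    fun n => abs_pos.mpr (sub_ne_zero.mpr (Ne.symm (hmean_ne n)))
  have hm2_le : ∀ n, (f n).m2 ≤ C2' * |1 - (f n).mean| := by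
    intro n
    have := (div_le_iff₀ (habs_pos n)).mp ((hC2 n).trans (le_max_left C2 0))
    linarith
  have hm3_le : ∀ n, (f n).m3 ≤ C3' * |1 - (f n).mean| := by
    intro n
    have := (div_le_iff₀ (habs_pos n)).mp ((hC3 n).trans (le_max_left C3 0))
    linarith
  have habs_tendsto : Tendsto (fun n => C2' * |1 - (f n).mean|) atTop (nhds 0) := by
    have h := ((tendsto_const_nhds (x := (1:ℝ)) (f := atTop (α := ℕ))).sub hC1a).abs.const_mul C2'
    simpa using h
  have hm2_tendsto : Tendsto (fun n => (f n).m2) atTop (nhds 0) :=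
    squeeze_zero (fun n => m2_nonneg (f n)) hm2_le habs_tendsto
  -- eventual "good" regime
  have hgood : ∀ᶠ n in atTop, 1/2 ≤ (f n).mean ∧ (f n).mean ≤ 2 ∧ (f n).m2 ≤ (f n).mean/2 := by
    have h1 : ∀ᶠ n in atTop, (f n).mean ∈ Set.Ioo (1/2 : ℝ) 2 :=
      hC1a (Ioo_mem_nhds (by norm_num) (by norm_num))
    have h2 : ∀ᶠ n in atTop, (f n).m2 < 1/4 :=
      hm2_tendsto (Iio_mem_nhds (by norm_num))
    filter_upwards [h1, h2] with n hn1 hn2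
    exact ⟨hn1.1.le, hn1.2.le, by linarith [hn1.1]⟩
  have hSgood : ∀ᶠ n in atTop,
      (0 ≤ S n ∧ S n ≤ 4*(f n).m3 + 3*(f n).m2*(f n).m2) ∧ (f n).m2 ≤ 1 := by
    filter_upwards [hgood] with n hn
    refine ⟨sup_bounds (f n) (hmean_sum n) (hm2_sum n) (hm3_sum n) hn.1 hn.2.1 hn.2.2, ?_⟩
    linarith [hn.2.1, hn.2.2]
  constructor
  · -- tendsto part
    set l := atTop ⊓ 𝓟 {n | (f n).mean < 1} with hl_def
    have hlt : ∀ᶠ n in l, (f n).mean < 1 :=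
      eventually_inf_principal.mpr (Eventually.of_forall fun n h => h)
    have hSgood' : ∀ᶠ n in l,
        (0 ≤ S n ∧ S n ≤ 4*(f n).m3 + 3*(f n).m2*(f n).m2) ∧ (f n).m2 ≤ 1 :=
      hSgood.filter_mono inf_le_left
    have hG : Tendsto (fun n => 4*((f n).m3/(1 - (f n).mean))
        + 3*((f n).m2 * ((f n).m2/(1 - (f n).mean)))) l (nhds 0) := by
      have h1 := hC3a.const_mul (4:ℝ)
      have h2 := ((hm2_tendsto.mono_left inf_le_left).mul hC2a).const_mul (3:ℝ)
      have := h1.add h2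
      simpa using this
    refine tendsto_of_tendsto_of_tendsto_of_le_of_le' tendsto_const_nhds hG ?_ ?_
    · filter_upwards [hlt, hSgood'] with n h1 h2
      exact div_nonneg h2.1.1 (by linarith)
    · filter_upwards [hlt, hSgood'] with n h1 h2
      have hpos : (0:ℝ) < 1 - (f n).mean := by linarith
      calc S n / (1 - (f n).mean)
          ≤ (4*(f n).m3 + 3*(f n).m2*(f n).m2) / (1 - (f n).mean) :=
            div_le_div_of_nonneg_right h2.1.2 hpos.le
        _ = 4*((f n).m3/(1 - (f n).mean)) + 3*((f n).m2 * ((f n).m2/(1 - (f n).mean))) := by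
            ring
  · -- boundedness part
    obtain ⟨N, hN⟩ := eventually_atTop.mp hSgood
    refine ⟨(4*C3' + 3*C2') + ∑ i ∈ Finset.range N, (abs (S i / abs (1 - (f i).mean))), fun n => ?_⟩
    have hsum0 : 0 ≤ ∑ i ∈ Finset.range N, (abs (S i / abs (1 - (f i).mean))) :=
      Finset.sum_nonneg fun i _ => abs_nonneg _
    rcases le_or_gt N n with hn | hn
    · have hSb := hN n hn
      have h1 : S n / |1 - (f n).mean| ≤ (4*(f n).m3 + 3*(f n).m2*(f n).m2) / |1 - (f n).mean| :=
        div_le_div_of_nonneg_right hSb.1.2 (habs_pos n).le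
      have h2 : (4*(f n).m3 + 3*(f n).m2*(f n).m2) / |1 - (f n).mean|
          = 4*((f n).m3/|1 - (f n).mean|) + 3*((f n).m2 * ((f n).m2/|1 - (f n).mean|)) := by ring
      have hx3 : (f n).m3/|1 - (f n).mean| ≤ C3' := (hC3 n).trans (le_max_left C3 0)
      have hx2 : (f n).m2/|1 - (f n).mean| ≤ C2' := (hC2 n).trans (le_max_left C2 0)
      have hx2p : 0 ≤ (f n).m2/|1 - (f n).mean| := div_nonneg (m2_nonneg (f n)) (habs_pos n).le
      have hm2_1 : (f n).m2 ≤ 1 := hSb.2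
      have h3 : (f n).m2 * ((f n).m2/|1 - (f n).mean|) ≤ 1 * C2' := by
        apply mul_le_mul hm2_1 hx2 hx2p (by norm_num)
      calc S n / |1 - (f n).mean| ≤ _ := h1
        _ = _ := h2
        _ ≤ 4*C3' + 3*C2' := by nlinarith [hx3, h3]
        _ ≤ _ := le_add_of_nonneg_right hsum0
    · calc S n / |1 - (f n).mean| ≤ (abs (S n / abs (1 - (f n).mean))) := le_abs_self _
        _ ≤ ∑ i ∈ Finset.range N, (abs (S i / abs (1 - (f i).mean))) :=
            Finset.single_le_sum (f := fun i => (abs (S i / abs (1 - (f i).mean))))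
              (fun i _ => abs_nonneg _) (Finset.mem_range.mpr hn)
        _ ≤ _ := by nlinarith [hC3'0, hC2'0]
end

section
/- Let f_{j+1}, …, f_n be probability generating functions of nonnegative-integer-valued random variables, each with positive finite mean f̄_k = f_k'(1) and finite f_k''(1). Write f_{n,n}(s) = s, f_{j,n} = f_{j+1} ∘ ⋯ ∘ f_n, f̄_{j,m} = ∏_{k=j+1}^{m} f̄_k, and let φ_k be the shape function of f_k. Then for every s ∈ [0,1): 1/(1 − f_{j,n}(s)) = 1/(f̄_{j,n}(1 − s)) + ∑_{k=j+1}^{n} φ_k(f_{k,n}(s)) / f̄_{j,k−1}. -/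
open Filter Finset

/-- `iterComp f j n s` is `f_{j,n}(s) = f_{j+1}(f_{j+2}(⋯ f_n(s)))`, with `f_{n,n}(s) = s`. -/
noncomputable def iterComp (f : ℕ → PGF) (j n : ℕ) (s : ℝ) : ℝ :=
  (List.range' (j+1) (n-j)).foldr (fun k t => (f k).eval t) s

/-!
The definition of the shape function is the one-step identity
`1 / (1 - f(t)) = φ(t) + 1 / (f̄ (1 - t))`, valid for every `t < 1`. Since a generating function
with positive mean maps `[0, 1)` into itself, it applies at `t = f_{j+1,n}(s)`, and unrolling it
from `j` up to `n` produces the sum, each step dividing the earlier terms by one more mean.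
-/

namespace PGF

variable (g : PGF) {s : ℝ}

lemma summable_mul_pow (hs₀ : 0 ≤ s) (hs₁ : s ≤ 1) : Summable fun k => g.p k * s ^ k :=
  g.hasSum_one.summable.of_nonneg_of_le (fun k => mul_nonneg (g.nonneg k) (pow_nonneg hs₀ k))
    fun k => mul_le_of_le_one_right (g.nonneg k) (pow_le_one₀ hs₀ hs₁)

lemma exists_pos_p_of_mean_pos (hm : 0 < g.mean) : ∃ m, 0 < m ∧ 0 < g.p m := by
  by_contra! h
  have hterm : ∀ k : ℕ, (k : ℝ) * g.p k = 0 := fun k => by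
    rcases Nat.eq_zero_or_pos k with rfl | hk
    · simp
    · simp [le_antisymm (h k hk) (g.nonneg k)]
  simp [mean, hterm] at hm

lemma eval_lt_one (hm : 0 < g.mean) (hs₀ : 0 ≤ s) (hs₁ : s < 1) : g.eval s < 1 := by
  obtain ⟨m, hm₀, hpm⟩ := g.exists_pos_p_of_mean_pos hm
  rw [← g.hasSum_one.tsum_eq]
  refine (g.summable_mul_pow hs₀ hs₁.le).tsum_lt_tsum (i := m)
    (fun k => mul_le_of_le_one_right (g.nonneg k) (pow_le_one₀ hs₀ hs₁.le)) ?_ g.hasSum_one.summable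
  exact mul_lt_of_lt_one_right hpm (pow_lt_one₀ hs₀ hs₁ hm₀.ne')

lemma eval_mem_Ico (hm : 0 < g.mean) (hs : s ∈ Set.Ico (0 : ℝ) 1) :
    g.eval s ∈ Set.Ico (0 : ℝ) 1 :=
  ⟨tsum_nonneg fun k => mul_nonneg (g.nonneg k) (pow_nonneg hs.1 k), g.eval_lt_one hm hs.1 hs.2⟩

lemma one_div_one_sub_eval (hs : s ≠ 1) :
    1 / (1 - g.eval s) = shape g s + 1 / (1 - s) / g.mean := by
  rw [shape, if_neg hs, div_div]
  ring

end PGF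

section iterComp

variable (f : ℕ → PGF) {j n : ℕ} {s : ℝ}

lemma iterComp_of_le (h : n ≤ j) : iterComp f j n s = s := by
  simp [iterComp, Nat.sub_eq_zero_of_le h]

lemma iterComp_of_lt (h : j < n) : iterComp f j n s = (f (j + 1)).eval (iterComp f (j + 1) n s) := by
  rw [iterComp, iterComp, show n - j = n - (j + 1) + 1 by omega, List.range'_succ, List.foldr_cons]

lemma iterComp_mem {S : Set ℝ} (hS : ∀ k, ∀ t ∈ S, (f k).eval t ∈ S) (hs : s ∈ S) :
    iterComp f j n s ∈ S := by
  unfold iterComp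
  induction List.range' (j + 1) (n - j) with
  | nil => exact hs
  | cons k _ ih => exact hS k _ ih

end iterComp

section Expansion

variable {𝕜 : Type*} [Field 𝕜] (a g : ℕ → 𝕜) {j n : ℕ}

lemma prod_Icc_succ_bot (h : j < n) :
    ∏ i ∈ Icc (j + 1) n, a i = a (j + 1) * ∏ i ∈ Icc (j + 2) n, a i := by
  rw [← mul_prod_Ioc_eq_prod_Icc (by omega), ← Icc_add_one_left_eq_Ioc]
  rfl

lemma sum_div_prod_Icc_succ_bot (h : j < n) :
    ∑ k ∈ Icc (j + 1) n, g k / ∏ i ∈ Icc (j + 1) (k - 1), a i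
      = g (j + 1) + (∑ k ∈ Icc (j + 2) n, g k / ∏ i ∈ Icc (j + 2) (k - 1), a i) / a (j + 1) := by
  rw [← add_sum_Ioc_eq_sum_Icc (by omega), ← Icc_add_one_left_eq_Ioc, sum_div,
    Nat.add_sub_cancel, Icc_eq_empty (by omega), prod_empty, div_one]
  congr 1
  refine sum_congr rfl fun k hk => ?_
  rw [prod_Icc_succ_bot a (by simp only [mem_Icc] at hk; omega), div_div, mul_comm (a _)]

end Expansion

theorem stmt4_general (f : ℕ → PGF) (n : ℕ)
    (hmean_pos : ∀ k, 0 < (f k).mean)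
    (j : ℕ) (s : ℝ) (hs : s ∈ Set.Ico (0 : ℝ) 1) :
    1 / (1 - iterComp f j n s)
      = 1 / ((∏ k ∈ Finset.Icc (j+1) n, (f k).mean) * (1 - s))
        + ∑ k ∈ Finset.Icc (j+1) n,
            shape (f k) (iterComp f k n s) / ∏ i ∈ Finset.Icc (j+1) (k-1), (f i).mean := by
  induction h : n - j generalizing j with
  | zero =>
    have hnj : n ≤ j := by omega
    simp [iterComp_of_le f hnj, Icc_eq_empty_of_lt (Nat.lt_succ_of_le hnj)]
  | succ d ih =>
    have hjn : j < n := by omega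
    have hx : iterComp f (j + 1) n s ≠ 1 :=
      (iterComp_mem f (fun k _ ht => (f k).eval_mem_Ico (hmean_pos k) ht) hs).2.ne
    rw [iterComp_of_lt f hjn, (f (j + 1)).one_div_one_sub_eval hx, ih (j + 1) (by omega),
      prod_Icc_succ_bot _ hjn, sum_div_prod_Icc_succ_bot _ _ hjn]
    -- as an atom, `1 - s` lets `ring` split the inverse of the product of means and `1 - s`
    generalize 1 - s = c
    ring

theorem stmt4 (f : ℕ → PGF) (n : ℕ)
    (hmean_pos : ∀ k, 0 < (f k).mean)
    (hmean_sum : ∀ k, Summable (fun j : ℕ => (j : ℝ) * (f k).p j))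
    (hm2_sum : ∀ k, Summable (fun j : ℕ => (j : ℝ) * ((j : ℝ) - 1) * (f k).p j))
    (j : ℕ) (hj : j ≤ n) (s : ℝ) (hs : s ∈ Set.Ico (0 : ℝ) 1) :
    1 / (1 - iterComp f j n s)
      = 1 / ((∏ k ∈ Finset.Icc (j+1) n, (f k).mean) * (1 - s))
        + ∑ k ∈ Finset.Icc (j+1) n,
            shape (f k) (iterComp f k n s) / ∏ i ∈ Finset.Icc (j+1) (k-1), (f i).mean :=
  stmt4_general f n hmean_pos j s hs
end

section
/- Let (f̄_n)_{n≥1} be positive reals with f̄_n → 1, ∑_n (1 − f̄_n)_+ = ∞, ∑_n (f̄_n − 1)_+ < ∞, and let A : ℕ → ℕ be nondecreasing with A(n) → ∞ and n · ∏_{j=1}^{A(n)} f̄_j → 1. Then for all reals 0 < ε ≤ m: limsup_{n→∞} ∑_{k=A(⌊nε⌋)}^{A(⌊nm⌋)} |1 − f̄_k| ≤ log(m/ε). -/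
open Filter Finset Topology

/-!
Write `a n = A ⌊nε⌋` and `b n = A ⌊nm⌋`. Since `|1 - x| = (1 - x) + 2 (x - 1)₊` and
`1 - x ≤ -log x`, the sum over `(a n, b n]` is at most `-log ∏_{(a n, b n]} f̄` plus twice a
tail sum of the summable series `∑ (f̄ k - 1)₊`. As `n ∏_{j ≤ A n} f̄ j → 1`, the product over
`(a n, b n]` is asymptotically `⌊nε⌋ / ⌊nm⌋ → ε / m`, so its `-log` tends to `log (m / ε)`,
while the tail sum and the remaining term `|1 - f̄ (a n)|` tend to `0`.
-/

lemma abs_one_sub_le_neg_log_add {x : ℝ} (hx : 0 < x) :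
    |1 - x| ≤ -Real.log x + 2 * max (x - 1) 0 := by
  have hlog := Real.log_le_sub_one_of_pos hx
  rcases le_total x 1 with h | h
  · rw [abs_of_nonneg (by linarith), max_eq_right (by linarith)]; linarith
  · rw [abs_of_nonpos (by linarith), max_eq_left (by linarith)]; linarith

lemma sum_abs_one_sub_le_neg_log_prod_add {ι : Type*} {s : Finset ι} {f : ι → ℝ}
    (hf : ∀ k ∈ s, 0 < f k) :
    ∑ k ∈ s, |1 - f k| ≤ -Real.log (∏ k ∈ s, f k) + 2 * ∑ k ∈ s, max (f k - 1) 0 := by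
  rw [Real.log_prod fun k hk => (hf k hk).ne', mul_sum, ← sum_neg_distrib, ← sum_add_distrib]
  exact sum_le_sum fun k hk => abs_one_sub_le_neg_log_add (hf k hk)

lemma prod_Ioc_eq_prod_Icc_one_div {K : Type*} [Field K] {f : ℕ → K} {a b : ℕ} (hab : a ≤ b)
    (ha : ∏ k ∈ Icc 1 a, f k ≠ 0) :
    ∏ k ∈ Ioc a b, f k = (∏ k ∈ Icc 1 b, f k) / ∏ k ∈ Icc 1 a, f k := by
  rw [eq_div_iff ha, mul_comm]
  simpa [← Icc_add_one_left_eq_Ioc] using prod_Ioc_consecutive f (Nat.zero_le a) hab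

lemma tendsto_sum_Ioc_of_summable {ι : Type*} {l : Filter ι} {g : ℕ → ℝ} (hg : Summable g)
    {a b : ι → ℕ} (ha : Tendsto a l atTop) (hb : Tendsto b l atTop) (hab : ∀ i, a i ≤ b i) :
    Tendsto (fun i => ∑ k ∈ Ioc (a i) (b i), g k) l (𝓝 0) := by
  have hS := hg.hasSum.tendsto_sum_nat
  have := (hS.comp ((tendsto_add_atTop_nat 1).comp hb)).sub
    (hS.comp ((tendsto_add_atTop_nat 1).comp ha))
  rw [sub_self] at this
  refine this.congr fun i => ?_
  simp only [Function.comp_apply]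
  rw [← sum_Ico_eq_sub _ (Nat.add_le_add_right (hab i) 1), Ico_add_one_add_one_eq_Ioc]

lemma Filter.Tendsto.div_of_mul_tendsto_one {α 𝕜 : Type*} [NormedField 𝕜] {l : Filter α}
    {x y p q : α → 𝕜} {c : 𝕜} (hp : Tendsto (fun i => x i * p i) l (𝓝 1))
    (hq : Tendsto (fun i => y i * q i) l (𝓝 1)) (hxy : Tendsto (fun i => x i / y i) l (𝓝 c)) :
    Tendsto (fun i => q i / p i) l (𝓝 c) := by
  have h := (hq.div hp one_ne_zero).mul hxy
  rw [div_one, one_mul] at h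
  refine h.congr' ?_
  filter_upwards [hp.eventually_ne one_ne_zero, hq.eventually_ne one_ne_zero] with i hpi hqi
  rw [mul_ne_zero_iff] at hpi hqi
  simp only [Pi.div_apply]
  rw [div_mul_div_comm, div_eq_div_iff (by simp [*]) hpi.2]
  ring

lemma tendsto_nat_floor_mul_div_nat_floor_mul {R : Type*} [TopologicalSpace R] [Field R]
    [LinearOrder R] [IsStrictOrderedRing R] [OrderTopology R] [FloorRing R]
    {a b : R} (ha : 0 ≤ a) (hb : 0 < b) :
    Tendsto (fun n : ℕ => (⌊(n : R) * a⌋₊ : R) / ⌊(n : R) * b⌋₊) atTop (𝓝 (a / b)) := by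
  have h := ((tendsto_nat_floor_mul_div_atTop ha).div (tendsto_nat_floor_mul_div_atTop hb.le)
    hb.ne').comp (tendsto_natCast_atTop_atTop (R := R))
  refine h.congr' ?_
  filter_upwards [eventually_ne_atTop 0] with n hn
  simp [mul_comm, div_div_div_cancel_right₀ (Nat.cast_ne_zero.2 hn : (n : R) ≠ 0)]

lemma sum_Icc_abs_one_sub_le {f : ℕ → ℝ} {a b : ℕ} (hab : a ≤ b) (hf : ∀ k ∈ Ioc a b, 0 < f k) :
    ∑ k ∈ Icc a b, |1 - f k| ≤
      |1 - f a| + (-Real.log (∏ k ∈ Ioc a b, f k) + 2 * ∑ k ∈ Ioc a b, max (f k - 1) 0) := by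
  rw [Icc_eq_cons_Ioc hab, sum_cons]
  exact add_le_add_right (sum_abs_one_sub_le_neg_log_prod_add hf) _

theorem stmt16_general (fbar : ℕ → ℝ) (A : ℕ → ℕ)
    (hpos : ∀ n, 1 ≤ n → 0 < fbar n)
    (hlim : Tendsto fbar atTop (nhds 1))
    (hsum : Summable (fun n => max (fbar n - 1) 0))
    (hA : Monotone A) (hAtop : Tendsto A atTop atTop)
    (hAn : Tendsto (fun n : ℕ => (n : ℝ) * ∏ j ∈ Finset.Icc 1 (A n), fbar j) atTop (nhds 1))
    (ε m : ℝ) (hε : 0 < ε) (hεm : ε ≤ m) :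
    Filter.limsup (fun n : ℕ =>
        ∑ k ∈ Finset.Icc (A ⌊(n : ℝ) * ε⌋₊) (A ⌊(n : ℝ) * m⌋₊), |1 - fbar k|) atTop
      ≤ Real.log (m / ε) := by
  have hm : 0 < m := hε.trans_le hεm
  have hfloor (c : ℝ) (hc : 0 < c) : Tendsto (fun n : ℕ => ⌊(n : ℝ) * c⌋₊) atTop atTop := by
    simpa only [mul_comm] using tendsto_nat_floor_mul_atTop c hc
  set a : ℕ → ℕ := fun n => A ⌊(n : ℝ) * ε⌋₊
  set b : ℕ → ℕ := fun n => A ⌊(n : ℝ) * m⌋₊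
  have hab (n : ℕ) : a n ≤ b n := hA (Nat.floor_mono (by gcongr))
  have ha : Tendsto a atTop atTop := hAtop.comp (hfloor ε hε)
  have hb : Tendsto b atTop atTop := hAtop.comp (hfloor m hm)
  have hprod : Tendsto (fun n => ∏ k ∈ Ioc (a n) (b n), fbar k) atTop (𝓝 (ε / m)) := by
    refine ((hAn.comp (hfloor ε hε)).div_of_mul_tendsto_one (hAn.comp (hfloor m hm))
      (tendsto_nat_floor_mul_div_nat_floor_mul hε.le hm)).congr fun n => ?_
    exact (prod_Ioc_eq_prod_Icc_one_div (hab n)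
      (prod_pos fun k hk => hpos k (mem_Icc.1 hk).1).ne').symm
  have hbound : Tendsto (fun n => |1 - fbar (a n)| + (-Real.log (∏ k ∈ Ioc (a n) (b n), fbar k)
      + 2 * ∑ k ∈ Ioc (a n) (b n), max (fbar k - 1) 0)) atTop (𝓝 (Real.log (m / ε))) := by
    have := ((hlim.comp ha).const_sub 1).abs.add ((hprod.log (by positivity)).neg.add
      ((tendsto_sum_Ioc_of_summable hsum ha hb hab).const_mul 2))
    simpa [← Real.log_inv] using this
  refine (limsup_le_limsup (Eventually.of_forall fun n => sum_Icc_abs_one_sub_le (hab n)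
    fun k hk => hpos k (Nat.one_le_of_lt (mem_Ioc.1 hk).1))
    (isCoboundedUnder_le_of_le atTop fun n => sum_nonneg fun k _ => abs_nonneg _)
    hbound.isBoundedUnder_le).trans hbound.limsup_eq.le

theorem stmt16 (fbar : ℕ → ℝ) (A : ℕ → ℕ)
    (hpos : ∀ n, 1 ≤ n → 0 < fbar n)
    (hlim : Tendsto fbar atTop (nhds 1))
    (hdiv : ¬ Summable (fun n => max (1 - fbar n) 0))
    (hsum : Summable (fun n => max (fbar n - 1) 0))
    (hA : Monotone A) (hAtop : Tendsto A atTop atTop)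
    (hAn : Tendsto (fun n : ℕ => (n : ℝ) * ∏ j ∈ Finset.Icc 1 (A n), fbar j) atTop (nhds 1))
    (ε m : ℝ) (hε : 0 < ε) (hεm : ε ≤ m) :
    Filter.limsup (fun n : ℕ =>
        ∑ k ∈ Finset.Icc (A ⌊(n : ℝ) * ε⌋₊) (A ⌊(n : ℝ) * m⌋₊), |1 - fbar k|) atTop
      ≤ Real.log (m / ε) :=
  stmt16_general fbar A hpos hlim hsum hA hAtop hAn ε m hε hεm
end
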